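/- arXiv:2112.09350 — 2 statements merged into one kernel-verified Lean document; each statement's English description precedes it below -/
import Mathlib

section
/- There is a constant C > 0 such that for every t ∈ [0,T], every h ∈ [0,T−t], and every continuous function Y⁰ : [t,t+h] → ℝ satisfying the backward integral equation Y⁰_s = ∫_s^{t+h} inf_{α∈A} F(r, Y⁰_r, α) dr for all s ∈ [t,t+h], one has ∫_t^{t+h} |Y⁰_s| ds ≤ C h^{3/2}. -/
open Set Filter Matrix
open scoped RealInnerProductSpace

noncomputable section

/-- `ℝⁿ` with the Euclidean norm. -/
abbrev Vec (n : ℕ) := EuclideanSpace ℝ (Fin n)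

/-- The time derivative `∂_s φ(s,x)`. -/
def timeDeriv {n : ℕ} (φ : ℝ × Vec n → ℝ) (s : ℝ) (x : Vec n) : ℝ :=
  deriv (fun τ => φ (τ, x)) s

/-- The spatial gradient `D_x φ(s,x)` as a vector of `ℝⁿ`. -/
def spaceGrad {n : ℕ} (φ : ℝ × Vec n → ℝ) (s : ℝ) (x : Vec n) : Vec n :=
  (EuclideanSpace.equiv (Fin n) ℝ).symm
    (fun i => fderiv ℝ (fun y => φ (s, y)) x (EuclideanSpace.single i 1))

/-- The spatial Hessian `D²_x φ(s,x)` as an `n × n` matrix. -/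
def spaceHess {n : ℕ} (φ : ℝ × Vec n → ℝ) (s : ℝ) (x : Vec n) :
    Matrix (Fin n) (Fin n) ℝ :=
  Matrix.of fun i j =>
    fderiv ℝ (fun y => fderiv ℝ (fun y' => φ (s, y')) y (EuclideanSpace.single j 1)) x
      (EuclideanSpace.single i 1)

/-- `φ` is `C³` with bounded derivatives of orders 1–3. -/
def IsTestFn {n : ℕ} (φ : ℝ × Vec n → ℝ) : Prop :=
  ContDiff ℝ 3 φ ∧
    ∀ k : ℕ, 1 ≤ k → k ≤ 3 → ∃ M, ∀ p : ℝ × Vec n, ‖iteratedFDeriv ℝ k φ p‖ ≤ M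

attribute [local instance] Matrix.frobeniusSeminormedAddCommGroup

/-!
On the compact set `[0,T] × A` the map `(s, α) ↦ F(s, 0, α)` is continuous, hence bounded by
some `M`, and `F` is `k_f`-Lipschitz in `y`; so `|inf_α F(r, y, α)| ≤ k_f |y| + M`. The integral
equation then gives `|Y⁰_s| ≤ ∫_s^{t+h} (k_f |Y⁰_r| + M) dr`, and the backward Grönwall inequality
yields `|Y⁰_s| ≤ M (t+h-s) e^{k_f (t+h-s)} ≤ M e^{k_f T} h`. Integrating,
`∫_t^{t+h} |Y⁰| ≤ M e^{k_f T} h² ≤ M e^{k_f T} √T h^{3/2}`.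
-/

open intervalIntegral Real Topology

section TestFunction

variable {n : ℕ} {φ : ℝ × Vec n → ℝ}

lemma continuous_timeDeriv (hφ : ContDiff ℝ 1 φ) (x : Vec n) :
    Continuous fun s => timeDeriv φ s x :=
  (hφ.comp (contDiff_id.prodMk contDiff_const)).continuous_deriv le_rfl

lemma continuous_spaceGrad (hφ : ContDiff ℝ 1 φ) (x : Vec n) :
    Continuous fun s => spaceGrad φ s x := by
  have hφ' : ContDiff ℝ 1 fun p : ℝ × Vec n => φ (p.1, p.2) := hφ
  refine (EuclideanSpace.equiv (Fin n) ℝ).symm.continuous.comp (continuous_pi fun i => ?_)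
  exact (hφ'.fderiv_apply (n := 0) contDiff_const contDiff_const le_rfl).continuous

lemma continuous_spaceHess (hφ : ContDiff ℝ 2 φ) (x : Vec n) :
    Continuous fun s => spaceHess φ s x := by
  refine continuous_pi fun i => continuous_pi fun j => ?_
  have hgrad : ContDiff ℝ 1 fun p : ℝ × Vec n =>
      fderiv ℝ (fun y' => φ (p.1, y')) p.2 (EuclideanSpace.single j 1) :=
    ContDiff.fderiv_apply (f := fun (p : ℝ × Vec n) y' => φ (p.1, y'))
      (hφ.comp (by fun_prop)) contDiff_snd contDiff_const le_rfl
  exact (hgrad.fderiv_apply (n := 0) contDiff_const contDiff_const le_rfl).continuous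

end TestFunction

lemma hasDerivWithinAt_integral_Ici_of_continuousOn {g : ℝ → ℝ} {a b x : ℝ}
    (hg : ContinuousOn g (Icc a b)) (hx : x ∈ Ico a b) :
    HasDerivWithinAt (fun y => ∫ r in a..y, g r) (g x) (Ici x) x := by
  have hmem : Icc a b ∈ 𝓝[>] x :=
    mem_of_superset (Ioo_mem_nhdsGT hx.2) (Ioo_subset_Icc_self.trans (Icc_subset_Icc_left hx.1))
  exact integral_hasDerivWithinAt_right
    ((hg.mono (Icc_subset_Icc_right hx.2.le)).intervalIntegrable_of_Icc hx.1)
    ⟨Icc a b, hmem, hg.aestronglyMeasurable measurableSet_Icc⟩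
    ((hg x (Ico_subset_Icc_self hx)).mono_of_mem_nhdsWithin hmem)

lemma continuousOn_primitive_Icc_of_continuousOn {g : ℝ → ℝ} {a b : ℝ}
    (hg : ContinuousOn g (Icc a b)) : ContinuousOn (fun x => ∫ r in a..x, g r) (Icc a b) := by
  rcases le_total a b with hab | hab
  · rw [← uIcc_of_le hab] at hg ⊢
    exact continuousOn_primitive_interval hg.integrableOn_uIcc
  · exact (subsingleton_Icc_of_ge hab).continuousOn _

theorem le_gronwallBound_of_le_integral {g : ℝ → ℝ} {K ε a b : ℝ} (hK : 0 ≤ K)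
    (hg : ContinuousOn g (Icc a b)) (h : ∀ x ∈ Icc a b, g x ≤ ∫ r in a..x, K * g r + ε) :
    ∀ x ∈ Icc a b, g x ≤ gronwallBound 0 K ε (x - a) := by
  have hint : ContinuousOn (fun r => K * g r + ε) (Icc a b) := by fun_prop
  intro x hx
  refine (h x hx).trans (le_gronwallBound_of_liminf_deriv_right_le (f' := fun r => K * g r + ε)
    (continuousOn_primitive_Icc_of_continuousOn hint) (fun y hy r hr => ?_) (by simp)
    (fun y hy => ?_) x hx)
  · simpa [slope_def_field, div_eq_inv_mul] using
      (hasDerivWithinAt_integral_Ici_of_continuousOn hint hy).liminf_right_slope_le hr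
  · gcongr
    exact h y (Ico_subset_Icc_self hy)

theorem le_gronwallBound_of_le_integral_right {g : ℝ → ℝ} {K ε a b : ℝ} (hK : 0 ≤ K)
    (hg : ContinuousOn g (Icc a b)) (h : ∀ x ∈ Icc a b, g x ≤ ∫ r in x..b, K * g r + ε) :
    ∀ x ∈ Icc a b, g x ≤ gronwallBound 0 K ε (b - x) := by
  have hrefl : ∀ x ∈ Icc a b, a + b - x ∈ Icc a b := fun x hx =>
    ⟨by linarith [hx.2], by linarith [hx.1]⟩
  have key := le_gronwallBound_of_le_integral (g := fun y => g (a + b - y)) (ε := ε) hK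
    (hg.comp (by fun_prop) hrefl) fun y hy => by
      have hsub := integral_comp_sub_left (a := a) (b := y) (fun r => K * g r + ε) (a + b)
      rw [add_sub_cancel_left] at hsub
      exact (h _ (hrefl y hy)).trans_eq hsub.symm
  intro x hx
  simpa [show a + b - x - a = b - x by ring] using key _ (hrefl x hx)

lemma gronwallBound_zero_le {K ε x : ℝ} (hK : 0 ≤ K) (hε : 0 ≤ ε) :
    gronwallBound 0 K ε x ≤ ε * x * exp (K * x) := by
  rcases hK.eq_or_lt with rfl | hK
  · simp [gronwallBound_K0]
  · rw [gronwallBound_of_K_ne_0 hK.ne']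
    have hexp : exp (K * x) - 1 ≤ K * x * exp (K * x) := by
      have h := mul_le_mul_of_nonneg_right (add_one_le_exp (-(K * x))) (exp_pos (K * x)).le
      rw [← exp_add, neg_add_cancel, exp_zero] at h
      linarith
    calc 0 * exp (K * x) + ε / K * (exp (K * x) - 1) ≤ ε / K * (K * x * exp (K * x)) := by
          rw [zero_mul, zero_add]; gcongr
      _ = ε * x * exp (K * x) := by field_simp

section HJB

variable {n d : ℕ} {A : Type*}

def hjbOperator (a : ℝ → Vec n → A → Vec n) (σ : ℝ → Vec n → A → Matrix (Fin n) (Fin d) ℝ)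
    (f : ℝ → Vec n → ℝ → Vec d → A → ℝ) (φ : ℝ × Vec n → ℝ) (x : Vec n) (s y : ℝ) (α : A) : ℝ :=
  timeDeriv φ s x
    + (1 / 2) * Matrix.trace (σ s x α * (σ s x α)ᵀ * spaceHess φ s x)
    + ⟪spaceGrad φ s x, a s x α⟫
    + f s x (φ (s, x) + y)
        ((EuclideanSpace.equiv (Fin d) ℝ).symm
          (fun j => ∑ i, spaceGrad φ s x i * σ s x α i j)) α

variable {S : Set ℝ} {a : ℝ → Vec n → A → Vec n}
  {σ : ℝ → Vec n → A → Matrix (Fin n) (Fin d) ℝ} {f : ℝ → Vec n → ℝ → Vec d → A → ℝ}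
  {φ : ℝ × Vec n → ℝ}

lemma continuousOn_hjbOperator [TopologicalSpace A]
    (ha : ContinuousOn (fun q : ℝ × Vec n × A => a q.1 q.2.1 q.2.2) (S ×ˢ univ))
    (hσ : ContinuousOn (fun q : ℝ × Vec n × A => σ q.1 q.2.1 q.2.2) (S ×ˢ univ))
    (hf : ContinuousOn
      (fun q : ℝ × Vec n × ℝ × Vec d × A => f q.1 q.2.1 q.2.2.1 q.2.2.2.1 q.2.2.2.2) (S ×ˢ univ))
    (hφ : ContDiff ℝ 2 φ) (x : Vec n) (y : ℝ) :
    ContinuousOn (fun p : ℝ × A => hjbOperator a σ f φ x p.1 y p.2) (S ×ˢ univ) := by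
  have hfst : MapsTo (fun p : ℝ × A => (p.1, x, p.2)) (S ×ˢ univ) (S ×ˢ univ) :=
    fun p hp => ⟨hp.1, trivial⟩
  have haS : ContinuousOn (fun p : ℝ × A => a p.1 x p.2) (S ×ˢ univ) :=
    ha.comp (by fun_prop) hfst
  have hσS : ContinuousOn (fun p : ℝ × A => σ p.1 x p.2) (S ×ˢ univ) :=
    hσ.comp (by fun_prop) hfst
  have hgrad : Continuous fun p : ℝ × A => spaceGrad φ p.1 x :=
    (continuous_spaceGrad (hφ.of_le one_le_two) x).comp continuous_fst
  have hz : ContinuousOn (fun p : ℝ × A => (EuclideanSpace.equiv (Fin d) ℝ).symm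
      (fun j => ∑ i, spaceGrad φ p.1 x i * σ p.1 x p.2 i j)) (S ×ˢ univ) := by
    refine (EuclideanSpace.equiv (Fin d) ℝ).symm.continuous.comp_continuousOn
      (continuousOn_pi.mpr fun j => continuousOn_finsetSum _ fun i _ => ContinuousOn.mul ?_ ?_)
    · exact ((PiLp.continuous_apply 2 _ i).comp hgrad).continuousOn
    · exact ((continuous_apply j).comp (continuous_apply i)).comp_continuousOn hσS
  have hφx : Continuous fun p : ℝ × A => φ (p.1, x) + y :=
    (hφ.continuous.comp (continuous_fst.prodMk continuous_const)).add continuous_const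
  have hfS : ContinuousOn (fun p : ℝ × A => f p.1 x (φ (p.1, x) + y)
      ((EuclideanSpace.equiv (Fin d) ℝ).symm
        (fun j => ∑ i, spaceGrad φ p.1 x i * σ p.1 x p.2 i j)) p.2) (S ×ˢ univ) :=
    hf.comp (continuousOn_fst.prodMk (continuousOn_const.prodMk
      (hφx.continuousOn.prodMk (hz.prodMk continuousOn_snd))))
      fun p hp => ⟨hp.1, trivial⟩
  have htime : Continuous fun p : ℝ × A => timeDeriv φ p.1 x :=
    (continuous_timeDeriv (hφ.of_le one_le_two) x).comp continuous_fst
  have hhess : Continuous fun p : ℝ × A => spaceHess φ p.1 x :=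
    (continuous_spaceHess hφ x).comp continuous_fst
  have htrace : Continuous fun q : Matrix (Fin n) (Fin d) ℝ × Matrix (Fin n) (Fin n) ℝ =>
      Matrix.trace (q.1 * q.1ᵀ * q.2) := by fun_prop
  have htr := htrace.comp_continuousOn (hσS.prodMk hhess.continuousOn)
  exact ((htime.continuousOn.add (continuousOn_const.mul htr)).add
    (hgrad.continuousOn.inner haS)).add hfS

lemma abs_hjbOperator_sub_le {kf : ℝ}
    (hflip : ∀ t ∈ S, ∀ (x' : Vec n) (y y' : ℝ) (z z' : Vec d) (α : A),
      |f t x' y' z' α - f t x' y z α| ≤ kf * (|y' - y| + ‖z' - z‖))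
    {s : ℝ} (hs : s ∈ S) (x : Vec n) (y y' : ℝ) (α : A) :
    |hjbOperator a σ f φ x s y' α - hjbOperator a σ f φ x s y α| ≤ kf * |y' - y| := by
  simpa [hjbOperator] using hflip s hs x (φ (s, x) + y) (φ (s, x) + y')
    ((EuclideanSpace.equiv (Fin d) ℝ).symm (fun j => ∑ i, spaceGrad φ s x i * σ s x α i j))
    ((EuclideanSpace.equiv (Fin d) ℝ).symm (fun j => ∑ i, spaceGrad φ s x i * σ s x α i j)) α

end HJB

lemma IsCompact.exists_abs_le_mul_abs_add {A : Type*} [TopologicalSpace A] [CompactSpace A]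
    {S : Set ℝ} (hS : IsCompact S) {G : ℝ → ℝ → A → ℝ} {K : ℝ}
    (hG₀ : ContinuousOn (fun p : ℝ × A => G p.1 0 p.2) (S ×ˢ univ))
    (hG : ∀ s ∈ S, ∀ y α, |G s y α - G s 0 α| ≤ K * |y|) :
    ∃ M ≥ 0, ∀ s ∈ S, ∀ y α, |G s y α| ≤ K * |y| + M := by
  obtain ⟨M, hM⟩ := (hS.prod isCompact_univ).exists_bound_of_continuousOn hG₀
  refine ⟨max M 0, le_max_right _ _, fun s hs y α => ?_⟩
  have h₀ : |G s 0 α| ≤ max M 0 := (hM (s, α) ⟨hs, trivial⟩).trans (le_max_left _ _)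
  linarith [abs_sub_abs_le_abs_sub (G s y α) (G s 0 α), hG s hs y α]

lemma abs_ciInf_le_of_forall_abs_le {ι : Type*} [Nonempty ι] {g : ι → ℝ} {B : ℝ}
    (h : ∀ i, |g i| ≤ B) : |⨅ i, g i| ≤ B := by
  have hbdd : BddBelow (range g) := ⟨-B, by rintro _ ⟨i, rfl⟩; exact (abs_le.1 (h i)).1⟩
  obtain ⟨i⟩ := ‹Nonempty ι›
  exact abs_le.2 ⟨le_ciInf fun j => (abs_le.1 (h j)).1, (ciInf_le hbdd i).trans (abs_le.1 (h i)).2⟩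

lemma abs_intervalIntegral_le_of_abs_le {g B : ℝ → ℝ} {a b : ℝ} (hab : a ≤ b)
    (hB : ContinuousOn B (Icc a b)) (h : ∀ r ∈ Ioc a b, |g r| ≤ B r) :
    |∫ r in a..b, g r| ≤ ∫ r in a..b, B r := by
  rw [← Real.norm_eq_abs]
  exact norm_integral_le_of_norm_le hab (MeasureTheory.ae_of_all _ h)
    (hB.intervalIntegrable_of_Icc hab)

lemma sq_le_sqrt_mul_rpow_three_halves {h T : ℝ} (hh : 0 ≤ h) (hhT : h ≤ T) :
    h ^ 2 ≤ √T * h ^ ((3 : ℝ) / 2) := by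
  have hpow : h ^ ((3 : ℝ) / 2) = √h * h := by
    rw [show (3 : ℝ) / 2 = 1 / 2 + 1 by norm_num, rpow_add' hh (by norm_num), rpow_one,
      sqrt_eq_rpow]
  calc h ^ 2 = √h * √h * h := by rw [mul_self_sqrt hh, sq]
    _ ≤ √T * √h * h := by gcongr
    _ = √T * h ^ ((3 : ℝ) / 2) := by rw [hpow, mul_assoc]

theorem ode_Y0_estimate_general
    {n d : ℕ}
    {A : Type*} [MetricSpace A] [CompactSpace A] [Nonempty A]
    (T : ℝ) (x : Vec n)
    (a : ℝ → Vec n → A → Vec n) (σ : ℝ → Vec n → A → Matrix (Fin n) (Fin d) ℝ)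
    (f : ℝ → Vec n → ℝ → Vec d → A → ℝ)
    (hacont : ContinuousOn (fun q : ℝ × Vec n × A => a q.1 q.2.1 q.2.2)
      (Set.Icc 0 T ×ˢ (Set.univ : Set (Vec n × A))))
    (hσcont : ContinuousOn (fun q : ℝ × Vec n × A => σ q.1 q.2.1 q.2.2)
      (Set.Icc 0 T ×ˢ (Set.univ : Set (Vec n × A))))
    (hfcont : ContinuousOn
      (fun q : ℝ × Vec n × ℝ × Vec d × A => f q.1 q.2.1 q.2.2.1 q.2.2.2.1 q.2.2.2.2)
      (Set.Icc 0 T ×ˢ (Set.univ : Set (Vec n × ℝ × Vec d × A))))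
    (kf : ℝ) (hkf : 0 < kf)
    (hflip : ∀ t ∈ Set.Icc (0:ℝ) T, ∀ (x' : Vec n) (y y' : ℝ) (z z' : Vec d) (α : A),
      |f t x' y' z' α - f t x' y z α| ≤ kf * (|y' - y| + ‖z' - z‖))
    (φ : ℝ × Vec n → ℝ) (hφ : IsTestFn φ)
    (F : ℝ → ℝ → A → ℝ)
    (hF : ∀ (s : ℝ) (y : ℝ) (α : A),
      F s y α = timeDeriv φ s x
        + (1 / 2) * Matrix.trace (σ s x α * (σ s x α)ᵀ * spaceHess φ s x)
        + ⟪spaceGrad φ s x, a s x α⟫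
        + f s x (φ (s, x) + y)
            ((EuclideanSpace.equiv (Fin d) ℝ).symm
              (fun j => ∑ i, spaceGrad φ s x i * σ s x α i j)) α) :
    ∃ C > 0, ∀ t ∈ Set.Icc (0:ℝ) T, ∀ h ∈ Set.Icc (0:ℝ) (T - t),
      ∀ Y : ℝ → ℝ, ContinuousOn Y (Set.Icc t (t + h)) →
        (∀ s ∈ Set.Icc t (t + h), Y s = ∫ r in s..(t + h), ⨅ α : A, F r (Y r) α) →
        (∫ s in t..(t + h), |Y s|) ≤ C * h ^ ((3 : ℝ) / 2) := by
  obtain rfl : F = hjbOperator a σ f φ x := funext fun s => funext fun y => funext (hF s y)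
  obtain ⟨M, hM, hFM⟩ := isCompact_Icc.exists_abs_le_mul_abs_add
    (continuousOn_hjbOperator hacont hσcont hfcont (hφ.1.of_le (by norm_num)) x 0)
    fun s hs y α => by simpa using abs_hjbOperator_sub_le hflip hs x 0 y α
  refine ⟨M * exp (kf * T) * √T + 1, by positivity, fun t ht h hh Y hYc hY => ?_⟩
  have hth : t ≤ t + h := by linarith [hh.1]
  have hsub : Icc t (t + h) ⊆ Icc 0 T := Icc_subset_Icc ht.1 (by linarith [hh.2])
  have hYint : ∀ s ∈ Icc t (t + h), |Y s| ≤ ∫ r in s..(t + h), kf * |Y r| + M := by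
    intro s hs
    rw [hY s hs]
    refine abs_intervalIntegral_le_of_abs_le hs.2
      (((hYc.abs.mono (Icc_subset_Icc_left hs.1)).const_mul kf).add continuousOn_const)
      fun r hr => abs_ciInf_le_of_forall_abs_le fun α => ?_
    exact hFM r (hsub ⟨hs.1.trans hr.1.le, hr.2⟩) (Y r) α
  have hYpt : ∀ s ∈ Icc t (t + h), |Y s| ≤ M * exp (kf * T) * h := fun s hs =>
    calc |Y s| ≤ gronwallBound 0 kf M (t + h - s) :=
          le_gronwallBound_of_le_integral_right hkf.le hYc.abs hYint s hs
      _ ≤ M * (t + h - s) * exp (kf * (t + h - s)) := gronwallBound_zero_le hkf.le hM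
      _ ≤ M * h * exp (kf * T) := by
          have := hh.1
          gcongr <;> linarith [hs.1, hs.2, ht.1, hh.2]
      _ = M * exp (kf * T) * h := by ring
  calc ∫ s in t..(t + h), |Y s| ≤ ∫ s in t..(t + h), M * exp (kf * T) * h :=
        integral_mono_on hth (hYc.abs.intervalIntegrable_of_Icc hth) intervalIntegrable_const hYpt
    _ = M * exp (kf * T) * h ^ 2 := by rw [integral_const, smul_eq_mul]; ring
    _ ≤ M * exp (kf * T) * (√T * h ^ ((3 : ℝ) / 2)) := by
        gcongr; exact sq_le_sqrt_mul_rpow_three_halves hh.1 (by linarith [hh.2, ht.1])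
    _ ≤ (M * exp (kf * T) * √T + 1) * h ^ ((3 : ℝ) / 2) := by
        nlinarith [rpow_nonneg hh.1 ((3 : ℝ) / 2)]

/-- There is a constant `C > 0` such that for every `t ∈ [0,T]`,
`h ∈ [0, T - t]` and every continuous solution `Y⁰` of the backward integral equation
`Y⁰_s = ∫_s^{t+h} inf_{α ∈ A} F(r, Y⁰_r, α) dr` on `[t, t+h]`, one has
`∫_t^{t+h} |Y⁰_s| ds ≤ C h^{3/2}`. -/
theorem ode_Y0_estimate
    {n d : ℕ} (hn : 1 ≤ n) (hd : 1 ≤ d)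
    {A : Type*} [MetricSpace A] [CompactSpace A] [Nonempty A]
    (T : ℝ) (hT : 0 < T) (x : Vec n)
    (a : ℝ → Vec n → A → Vec n) (σ : ℝ → Vec n → A → Matrix (Fin n) (Fin d) ℝ)
    (f : ℝ → Vec n → ℝ → Vec d → A → ℝ)
    (hacont : ContinuousOn (fun q : ℝ × Vec n × A => a q.1 q.2.1 q.2.2)
      (Set.Icc 0 T ×ˢ (Set.univ : Set (Vec n × A))))
    (hσcont : ContinuousOn (fun q : ℝ × Vec n × A => σ q.1 q.2.1 q.2.2)
      (Set.Icc 0 T ×ˢ (Set.univ : Set (Vec n × A))))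
    (hfcont : ContinuousOn
      (fun q : ℝ × Vec n × ℝ × Vec d × A => f q.1 q.2.1 q.2.2.1 q.2.2.2.1 q.2.2.2.2)
      (Set.Icc 0 T ×ˢ (Set.univ : Set (Vec n × ℝ × Vec d × A))))
    (C₀ ρ kf : ℝ) (hC₀ : 0 < C₀) (hρ : 0 < ρ) (hkf : 0 < kf)
    (hfb : ∀ t ∈ Set.Icc (0:ℝ) T, ∀ (x' : Vec n) (α : A),
      |f t x' 0 0 α| ≤ C₀ * (1 + ‖x'‖ ^ ρ))
    (hflip : ∀ t ∈ Set.Icc (0:ℝ) T, ∀ (x' : Vec n) (y y' : ℝ) (z z' : Vec d) (α : A),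
      |f t x' y' z' α - f t x' y z α| ≤ kf * (|y' - y| + ‖z' - z‖))
    (φ : ℝ × Vec n → ℝ) (hφ : IsTestFn φ)
    (F : ℝ → ℝ → A → ℝ)
    (hF : ∀ (s : ℝ) (y : ℝ) (α : A),
      F s y α = timeDeriv φ s x
        + (1 / 2) * Matrix.trace (σ s x α * (σ s x α)ᵀ * spaceHess φ s x)
        + ⟪spaceGrad φ s x, a s x α⟫
        + f s x (φ (s, x) + y)
            ((EuclideanSpace.equiv (Fin d) ℝ).symm
              (fun j => ∑ i, spaceGrad φ s x i * σ s x α i j)) α) :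
    ∃ C > 0, ∀ t ∈ Set.Icc (0:ℝ) T, ∀ h ∈ Set.Icc (0:ℝ) (T - t),
      ∀ Y : ℝ → ℝ, ContinuousOn Y (Set.Icc t (t + h)) →
        (∀ s ∈ Set.Icc t (t + h), Y s = ∫ r in s..(t + h), ⨅ α : A, F r (Y r) α) →
        (∫ s in t..(t + h), |Y s|) ≤ C * h ^ ((3 : ℝ) / 2) :=
  ode_Y0_estimate_general T x a σ f hacont hσcont hfcont kf hkf hflip φ hφ F hF
end
end

section
/- Suppose v : [0,T]×ℝⁿ → ℝ satisfies the obstacle inequality v(t,x) ≥ M v(t,x) for all (t,x) ∈ [0,T]×ℝⁿ. Then for every θ > 0, λ > 0 and every real exponent p ≥ 0, the function w(t,x) := v(t,x) + θ e^{−λt}( 1 + ((|x|−K_Γ)⁺)^p ) also satisfies w(t,x) ≥ M w(t,x) for all (t,x) ∈ [0,T]×ℝⁿ, where r⁺ := max(r,0). -/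
open Set Filter

noncomputable section

/-- If `v ≥ M v` on `[0,T] × ℝⁿ`, where
`M w (t,x) = sup_{b ∈ U} (w (t, Γ(t,x,b)) - ℓ(t,x,b))` and `|Γ(t,x,b)| ≤ K_Γ ∨ |x|`, then
for every `θ > 0`, `λ > 0` and real exponent `p ≥ 0`, the function
`w(t,x) = v(t,x) + θ e^{-λt}(1 + ((|x| - K_Γ)⁺)^p)` also satisfies `w ≥ M w` on
`[0,T] × ℝⁿ`. -/
theorem obstacle_preserved_under_perturbation
    {n : ℕ} (hn : 1 ≤ n) (T : ℝ) (hT : 0 < T)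
    {U : Type*} [MetricSpace U] [CompactSpace U] [Nonempty U]
    (Γ : ℝ → Vec n → U → Vec n) (ℓ : ℝ → Vec n → U → ℝ)
    (hΓcont : ContinuousOn (fun q : ℝ × Vec n × U => Γ q.1 q.2.1 q.2.2)
      (Set.Icc 0 T ×ˢ (Set.univ : Set (Vec n × U))))
    (hℓcont : ContinuousOn (fun q : ℝ × Vec n × U => ℓ q.1 q.2.1 q.2.2)
      (Set.Icc 0 T ×ˢ (Set.univ : Set (Vec n × U))))
    (KΓ : ℝ) (hKΓ : 0 < KΓ)
    (hΓb : ∀ t ∈ Set.Icc (0:ℝ) T, ∀ (x : Vec n) (b : U), ‖Γ t x b‖ ≤ max KΓ ‖x‖)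
    (v : ℝ × Vec n → ℝ)
    (hv : ∀ t ∈ Set.Icc (0:ℝ) T, ∀ x : Vec n,
      (⨆ b : U, (v (t, Γ t x b) - ℓ t x b)) ≤ v (t, x))
    (θ lam p : ℝ) (hθ : 0 < θ) (hlam : 0 < lam) (hp : 0 ≤ p) :
    ∀ t ∈ Set.Icc (0:ℝ) T, ∀ x : Vec n,
      (⨆ b : U,
        ((v (t, Γ t x b) +
            θ * Real.exp (-(lam * t)) * (1 + max (‖Γ t x b‖ - KΓ) 0 ^ p)) - ℓ t x b)) ≤
      v (t, x) + θ * Real.exp (-(lam * t)) * (1 + max (‖x‖ - KΓ) 0 ^ p) := by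
  intro t ht x
  set c : ℝ := θ * Real.exp (-(lam * t)) with hc
  have hcpos : 0 < c := mul_pos hθ (Real.exp_pos _)
  set G : ℝ := max (‖x‖ - KΓ) 0 with hG
  have hGnn : 0 ≤ G := le_max_right _ _
  have hGp : 0 ≤ G ^ p := Real.rpow_nonneg hGnn p
  have hgle : ∀ b : U, max (‖Γ t x b‖ - KΓ) 0 ^ p ≤ G ^ p := by
    intro b
    apply Real.rpow_le_rpow (le_max_right _ _) _ hp
    have h1 : ‖Γ t x b‖ - KΓ ≤ G := by
      have := hΓb t ht x b
      have : ‖Γ t x b‖ - KΓ ≤ max KΓ ‖x‖ - KΓ := by linarith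
      rcases le_total KΓ ‖x‖ with h | h
      · rw [max_eq_right h] at this; exact le_trans this (le_max_left _ _)
      · rw [max_eq_left h] at this
        have h0 : ‖Γ t x b‖ - KΓ ≤ 0 := by linarith
        exact le_trans h0 hGnn
    exact max_le h1 hGnn
  by_cases hbdd : BddAbove (Set.range fun b : U => v (t, Γ t x b) - ℓ t x b)
  · apply ciSup_le
    intro b
    have h1 : v (t, Γ t x b) - ℓ t x b ≤ v (t, x) :=
      le_trans (le_ciSup hbdd b) (hv t ht x)
    have h2 : c * (1 + max (‖Γ t x b‖ - KΓ) 0 ^ p) ≤ c * (1 + G ^ p) := by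
      apply mul_le_mul_of_nonneg_left _ hcpos.le
      linarith [hgle b]
    linarith
  · have hbdd2 : ¬ BddAbove (Set.range fun b : U =>
        (v (t, Γ t x b) + c * (1 + max (‖Γ t x b‖ - KΓ) 0 ^ p)) - ℓ t x b) := by
      intro ⟨M, hM⟩
      apply hbdd
      refine ⟨M - c, ?_⟩
      rintro y ⟨b, rfl⟩
      have hMb := hM ⟨b, rfl⟩
      have hpb : 0 ≤ max (‖Γ t x b‖ - KΓ) 0 ^ p := Real.rpow_nonneg (le_max_right _ _) p
      have : c ≤ c * (1 + max (‖Γ t x b‖ - KΓ) 0 ^ p) := by nlinarith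
      simp only at hMb ⊢
      linarith
    have h0 : (⨆ b : U,
        ((v (t, Γ t x b) + c * (1 + max (‖Γ t x b‖ - KΓ) 0 ^ p)) - ℓ t x b)) = 0 :=
      Real.iSup_of_not_bddAbove hbdd2
    have h1 : (⨆ b : U, (v (t, Γ t x b) - ℓ t x b)) = 0 :=
      Real.iSup_of_not_bddAbove hbdd
    have h2 := hv t ht x
    rw [h1] at h2
    rw [h0]
    nlinarith
end
end
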